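/- arXiv:1812.08702 — 5 statements merged into one kernel-verified Lean document; each statement's English description precedes it below -/
import Mathlib

section
/- The generating function of the partition function EO-bar satisfies the identity ∑_{n≥0} EO-bar(n) q^n = (q^4;q^4)_∞^3 / (q^2;q^2)_∞^2, where EO-bar(n) counts partitions of n in which every even part is less than each odd part and only the largest even part appears an odd number of times. -/
open PowerSeries

/-- `(q^a; q^c)_∞ = ∏_{i ≥ 0} (1 - q^{a + c·i})` as a formal power series in `q = X`
(for `a ≥ 1`, the `n`-th coefficient only depends on the first `n+1` factors). -/
noncomputable def qp (a c : ℕ) : PowerSeries ℚ :=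
  PowerSeries.mk fun n =>
    PowerSeries.coeff n
      (∏ i ∈ Finset.range (n + 1), (1 - (PowerSeries.X : PowerSeries ℚ) ^ (a + c * i)))
/-- The defining condition for the partitions counted by `EObar`: every even part is less
than each odd part, and only the largest even part appears an odd number of times. -/
def EOcond {n : ℕ} (p : n.Partition) : Prop :=
  (∀ a ∈ p.parts, ∀ b ∈ p.parts, Even a → Odd b → a < b) ∧
  (∀ a ∈ p.parts, Even (p.parts.count a) ∨ (Even a ∧ ∀ b ∈ p.parts, Even b → b ≤ a)) ∧
  (∀ a ∈ p.parts, Even a → (∀ b ∈ p.parts, Even b → b ≤ a) → Odd (p.parts.count a))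

/-- `EObar n` counts the partitions of `n` in which every even part is less than each odd
part and only the largest even part appears an odd number of times. -/
noncomputable def EObar (n : ℕ) : ℕ := Nat.card {p : n.Partition // EOcond p}

/-!
Sort EO-bar partitions by their largest even part `2a`. For `a ≥ 1` they are the partitions into
even parts `≤ 2a` and odd parts `> 2a` in which `2a` has odd and every other part even
multiplicity: those with no condition on the multiplicity of `2a`, minus those in which it is even.
Both families are cut out by conditions on single multiplicities, so their generating functions
are products over the parts, and the difference is `q^{2a} / ((q⁴;q⁴)_a (q^{4a+2};q⁴)_∞)`, which
is also right for `a = 0`. Hence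
`(q²;q⁴)_∞ ∑ EObar(n) qⁿ = ∑_a q^{2a} (q²;q⁴)_a / (q⁴;q⁴)_a = (q⁴;q⁴)_∞ / (q²;q⁴)_∞`
by the `q`-binomial theorem, and `(q²;q²)_∞ = (q²;q⁴)_∞ (q⁴;q⁴)_∞`. The `q`-binomial theorem
follows from the functional equation `(1 - z) F(z) = (1 - az) F(qz)` of
`F(z) = ∑ zⁿ (a;q)_n / (q;q)_n`, iterated `N` times and passed to the limit `N → ∞` in the
coefficientwise topology.
-/

open Finset Filter Topology
open scoped PowerSeries.WithPiTopology

theorem dvd_prod_sub_one {R ι : Type*} [CommRing R] {s : Finset ι} {f : ι → R} {a : R}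
    (hf : ∀ i ∈ s, a ∣ f i - 1) : a ∣ ∏ i ∈ s, f i - 1 := by
  refine prod_induction f (fun g ↦ a ∣ g - 1) (fun g h hg hh ↦ ?_) (by simp) hf
  rw [show g * h - 1 = (g - 1) * h + (h - 1) by ring]
  exact dvd_add (hg.mul_right h) hh

namespace PowerSeries.WithPiTopology

variable {R : Type*} [CommRing R] [TopologicalSpace R]

theorem summable_of_X_pow_dvd {f : ℕ → R⟦X⟧} (hf : ∀ n, X ^ n ∣ f n) : Summable f :=
  (summable_iff_summable_coeff R).mpr fun d ↦ summable_of_ne_finset_zero (s := range (d + 1))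
    fun n hn ↦ X_pow_dvd_iff.mp (hf n) d (by simpa using hn)

theorem X_pow_dvd_of_hasSum [T2Space R] {f : ℕ → R⟦X⟧} {g : R⟦X⟧} {N : ℕ} (hg : HasSum f g)
    (hf : ∀ n, X ^ N ∣ f n) : X ^ N ∣ g := by
  refine X_pow_dvd_iff.mpr fun d hd ↦ ?_
  have hcoeff := (hasSum_iff_hasSum_coeff R).mp hg d
  simp only [X_pow_dvd_iff.mp (hf _) d hd] at hcoeff
  exact hcoeff.unique hasSum_zero

theorem tendsto_of_X_pow_dvd_sub {f : ℕ → R⟦X⟧} {g : R⟦X⟧} (hf : ∀ N, X ^ N ∣ f N - g) :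
    Tendsto f atTop (𝓝 g) :=
  (tendsto_iff_coeff_tendsto R _ _ _).mpr fun d ↦
    tendsto_atTop_of_eventually_const (i₀ := d + 1) fun N hN ↦ by
      rw [← sub_eq_zero, ← map_sub]
      exact X_pow_dvd_iff.mp (hf N) d hN

omit [TopologicalSpace R] in
theorem coeff_prod_eq_coeff_prod_range {f : ℕ → R⟦X⟧} (hf : ∀ i, X ^ i ∣ f i - 1) {d : ℕ}
    {s : Finset ℕ} (hs : range (d + 1) ⊆ s) :
    coeff d (∏ i ∈ s, f i) = coeff d (∏ i ∈ range (d + 1), f i) := by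
  have htail : X ^ (d + 1) ∣ ∏ i ∈ s \ range (d + 1), f i - 1 :=
    dvd_prod_sub_one fun i hi ↦
      (pow_dvd_pow X (by simpa using (mem_sdiff.mp hi).2)).trans (hf i)
  rw [← prod_sdiff hs, ← sub_eq_zero, ← map_sub, ← sub_one_mul]
  exact X_pow_dvd_iff.mp (htail.mul_right _) d d.lt_succ_self

theorem hasProd_mk_coeff_prod_range {f : ℕ → R⟦X⟧} (hf : ∀ i, X ^ i ∣ f i - 1) :
    HasProd f (mk fun n ↦ coeff n (∏ i ∈ range (n + 1), f i)) :=
  (tendsto_iff_coeff_tendsto R _ _ _).mpr fun d ↦ tendsto_atTop_of_eventually_const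
    (i₀ := range (d + 1)) fun s hs ↦ by rw [coeff_mk, coeff_prod_eq_coeff_prod_range hf hs]

theorem hasSum_ite_dvd_smul_X_pow {e d : ℕ} (he : 0 < e) (hd : 0 < d) :
    HasSum (fun c ↦ (if d ∣ c then (1 : R) else 0) • (X : R⟦X⟧) ^ (e * c))
      (∑' t, ((X : R⟦X⟧) ^ (e * d)) ^ t) := by
  have hgeom := (summable_pow_of_constantCoeff_eq_zero
    (f := (X : R⟦X⟧) ^ (e * d)) (by simp [(Nat.mul_pos he hd).ne'])).hasSum
  refine ((mul_right_injective₀ hd.ne').hasSum_iff fun c hc ↦ ?_).mp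
    (by simpa [Function.comp_def, pow_mul] using hgeom)
  simp only [Set.mem_range, not_exists] at hc
  simp [show ¬ d ∣ c from fun ⟨t, ht⟩ ↦ hc t ht.symm]

end PowerSeries.WithPiTopology

open PowerSeries.WithPiTopology

section QPochhammer

variable {R : Type*} [CommRing R]

def qPochhammer (a q : R) (n : ℕ) : R := ∏ i ∈ range n, (1 - a * q ^ i)

theorem qPochhammer_zero (a q : R) : qPochhammer a q 0 = 1 := prod_range_zero _

theorem qPochhammer_succ (a q : R) (n : ℕ) :
    qPochhammer a q (n + 1) = qPochhammer a q n * (1 - a * q ^ n) := prod_range_succ _ _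

theorem constantCoeff_qPochhammer {a : R⟦X⟧} (ha : constantCoeff a = 0) (q : R⟦X⟧) (n : ℕ) :
    constantCoeff (qPochhammer a q n) = 1 := by
  simp [qPochhammer, map_prod, ha]

theorem qPochhammer_X_pow (a c n : ℕ) :
    qPochhammer (X ^ a : R⟦X⟧) (X ^ c) n = ∏ i ∈ range n, (1 - X ^ (a + c * i)) :=
  prod_congr rfl fun i _ ↦ by rw [← pow_mul, ← pow_add]

end QPochhammer

section QBinomial

variable {K : Type*} [Field K]

theorem qPochhammer_succ_mul_inv_mul {a q : K⟦X⟧} (hq : constantCoeff q = 0) (n : ℕ) :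
    qPochhammer a q (n + 1) * (qPochhammer q q (n + 1))⁻¹ * (1 - q ^ (n + 1)) =
      qPochhammer a q n * (qPochhammer q q n)⁻¹ * (1 - a * q ^ n) := by
  have hunit : (1 - q ^ (n + 1))⁻¹ * (1 - q ^ (n + 1)) = 1 :=
    PowerSeries.inv_mul_cancel _ (by simp [hq])
  rw [qPochhammer_succ, qPochhammer_succ, ← pow_succ', PowerSeries.mul_inv_rev]
  linear_combination qPochhammer a q n * (1 - a * q ^ n) * (qPochhammer q q n)⁻¹ * hunit

variable [TopologicalSpace K]

noncomputable def qBinomialSeries (a q z : K⟦X⟧) : K⟦X⟧ :=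
  ∑' n, z ^ n * qPochhammer a q n * (qPochhammer q q n)⁻¹

theorem hasSum_qBinomialSeries (a q : K⟦X⟧) {z : K⟦X⟧} (hz : constantCoeff z = 0) :
    HasSum (fun n ↦ z ^ n * qPochhammer a q n * (qPochhammer q q n)⁻¹) (qBinomialSeries a q z) :=
  (summable_of_X_pow_dvd fun n ↦
    ((pow_dvd_pow_of_dvd (X_dvd_iff.mpr hz) n).mul_right _).mul_right _).hasSum

variable [IsTopologicalRing K]

theorem hasSum_qBinomialSeries_sub_one (a q : K⟦X⟧) {z : K⟦X⟧} (hz : constantCoeff z = 0) :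
    HasSum (fun n ↦ z ^ (n + 1) * qPochhammer a q (n + 1) * (qPochhammer q q (n + 1))⁻¹)
      (qBinomialSeries a q z - 1) := by
  simpa [qPochhammer_zero] using (hasSum_nat_add_iff' 1).mpr (hasSum_qBinomialSeries a q hz)

variable [T2Space K]

theorem X_pow_dvd_qBinomialSeries_sub_one (a q : K⟦X⟧) {z : K⟦X⟧} (hz : constantCoeff z = 0)
    {N : ℕ} (hN : X ^ N ∣ z) : X ^ N ∣ qBinomialSeries a q z - 1 :=
  X_pow_dvd_of_hasSum (hasSum_qBinomialSeries_sub_one a q hz) fun n ↦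
    ((hN.trans (dvd_pow_self z n.succ_ne_zero)).mul_right _).mul_right _

theorem one_sub_mul_qBinomialSeries (a : K⟦X⟧) {q w : K⟦X⟧} (hq : constantCoeff q = 0)
    (hw : constantCoeff w = 0) :
    (1 - w) * qBinomialSeries a q w = (1 - a * w) * qBinomialSeries a q (w * q) := by
  have hwq : constantCoeff (w * q) = 0 := by simp [hw]
  have hshift := (hasSum_qBinomialSeries_sub_one a q hw).sub
    (hasSum_qBinomialSeries_sub_one a q hwq)
  have hrec := ((hasSum_qBinomialSeries a q hw).sub
    ((hasSum_qBinomialSeries a q hwq).mul_left a)).mul_left w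
  have hterm : ∀ n, w ^ (n + 1) * qPochhammer a q (n + 1) * (qPochhammer q q (n + 1))⁻¹ -
      (w * q) ^ (n + 1) * qPochhammer a q (n + 1) * (qPochhammer q q (n + 1))⁻¹ =
      w * (w ^ n * qPochhammer a q n * (qPochhammer q q n)⁻¹ -
        a * ((w * q) ^ n * qPochhammer a q n * (qPochhammer q q n)⁻¹)) := fun n ↦ by
    linear_combination w ^ (n + 1) * qPochhammer_succ_mul_inv_mul (a := a) hq n
  simp only [hterm] at hshift
  linear_combination hshift.unique hrec

theorem mul_qBinomialSeries_eq (a : K⟦X⟧) {q z P Q : K⟦X⟧} (hq : constantCoeff q = 0)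
    (hz : constantCoeff z = 0) (hP : Tendsto (qPochhammer z q) atTop (𝓝 P))
    (hQ : Tendsto (qPochhammer (a * z) q) atTop (𝓝 Q)) :
    P * qBinomialSeries a q z = Q := by
  have hiter : ∀ N, qPochhammer z q N * qBinomialSeries a q z =
      qPochhammer (a * z) q N * qBinomialSeries a q (z * q ^ N) := by
    intro N
    induction N with
    | zero => simp [qPochhammer_zero]
    | succ N ih =>
      have hzq : constantCoeff (z * q ^ N) = 0 := by simp [hz]
      rw [qPochhammer_succ, qPochhammer_succ, mul_right_comm, ih, pow_succ, ← mul_assoc z]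
      linear_combination qPochhammer (a * z) q N * one_sub_mul_qBinomialSeries a hq hzq
  have hlim : Tendsto (fun N ↦ qBinomialSeries a q (z * q ^ N)) atTop (𝓝 1) :=
    tendsto_of_X_pow_dvd_sub fun N ↦ X_pow_dvd_qBinomialSeries_sub_one a q (by simp [hz])
      ((pow_dvd_pow_of_dvd (X_dvd_iff.mpr hq) N).mul_left z)
  refine tendsto_nhds_unique (hP.mul_const _) ?_
  simpa [hiter] using hQ.mul hlim

end QBinomial

namespace Nat.Partition

variable {R : Type*} [CommRing R] [TopologicalSpace R] [IsTopologicalRing R] [T2Space R]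

theorem powerSeriesMk_card_dvd_count_mul_eq_one (S : ℕ → Prop) [DecidablePred S]
    {d : ℕ → ℕ} (hd : ∀ i, 0 < d i) {P : R⟦X⟧}
    (hP : HasProd (fun i ↦ if S (i + 1) then 1 - X ^ ((i + 1) * d (i + 1)) else 1) P) :
    PowerSeries.mk (fun n ↦ (#{p : n.Partition | ∀ i ∈ p.parts, S i ∧ d i ∣ p.parts.count i} : R))
      * P = 1 := by
  have hmk : genFun (R := R) (fun i c ↦ if S i ∧ d i ∣ c then 1 else 0) =
      PowerSeries.mk fun n ↦
        (#{p : n.Partition | ∀ i ∈ p.parts, S i ∧ d i ∣ p.parts.count i} : R) := by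
    ext n
    simp_rw [coeff_genFun, coeff_mk, card_filter, Finsupp.prod, prod_boole]
    simp
  rw [← hmk]
  refine ((hasProd_genFun _).mul hP).unique ?_
  convert hasProd_one with i
  split_ifs with hS
  · have hsum := (hasSum_nat_add_iff' 1).mpr
      (hasSum_ite_dvd_smul_X_pow (R := R) i.succ_pos (hd (i + 1)))
    simp only [hS, true_and, sum_range_one, dvd_zero, if_true, one_smul, mul_zero, pow_zero]
      at hsum ⊢
    rw [hsum.tsum_eq, add_sub_cancel, tsum_pow_mul_one_sub_of_constantCoeff_eq_zero]
    simp [(Nat.mul_pos i.succ_pos (hd (i + 1))).ne']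
  · simp [hS]

end Nat.Partition

theorem hasProd_qp (a : ℕ) {c : ℕ} (hc : 0 < c) :
    HasProd (fun i ↦ 1 - X ^ (a + c * i)) (qp a c) :=
  hasProd_mk_coeff_prod_range fun i ↦ by
    rw [sub_sub_cancel_left, dvd_neg]
    exact pow_dvd_pow X (le_add_left (Nat.le_mul_of_pos_left i hc))

theorem tendsto_qPochhammer_qp (a : ℕ) {c : ℕ} (hc : 0 < c) :
    Tendsto (qPochhammer (X ^ a) (X ^ c)) atTop (𝓝 (qp a c)) := by
  simpa only [← qPochhammer_X_pow] using (hasProd_qp a hc).tendsto_prod_nat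

theorem qp_eq_qPochhammer_mul (a k : ℕ) {c : ℕ} (hc : 0 < c) :
    qp a c = qPochhammer (X ^ a) (X ^ c) k * qp (a + c * k) c := by
  rw [qPochhammer_X_pow]
  refine (hasProd_qp a hc).unique (HasProd.prod_range_mul ?_)
  convert hasProd_qp (a + c * k) hc using 3 with i
  ring

theorem qp_two_two : qp 2 2 = qp 2 4 * qp 4 4 := by
  refine (hasProd_qp 2 two_pos).unique (HasProd.even_mul_odd ?_ ?_) <;>
  · convert hasProd_qp _ four_pos using 3 with i; ring

theorem constantCoeff_qp {a : ℕ} (ha : 0 < a) (c : ℕ) : constantCoeff (qp a c) = 1 := by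
  rw [← coeff_zero_eq_constantCoeff_apply, qp, coeff_mk]
  simp [ha.ne']

namespace Nat.Partition

variable {n : ℕ}

def largestEvenPart (p : n.Partition) : ℕ := (p.parts.toFinset.filter Even).sup id

variable {p : n.Partition}

theorem le_largestEvenPart {i : ℕ} (hi : i ∈ p.parts) (he : Even i) : i ≤ p.largestEvenPart :=
  le_sup (f := id) (by simp [hi, he])

theorem largestEvenPart_mem (h : p.largestEvenPart ≠ 0) :
    p.largestEvenPart ∈ p.parts ∧ Even p.largestEvenPart := by
  have hne : (p.parts.toFinset.filter Even).Nonempty :=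
    nonempty_iff_ne_empty.mpr fun h' ↦ h (by rw [largestEvenPart, h', sup_empty, bot_eq_zero])
  obtain ⟨i, hi, heq⟩ := exists_mem_eq_sup _ hne id
  rw [mem_filter, Multiset.mem_toFinset] at hi
  rw [largestEvenPart, heq]
  exact hi

theorem even_largestEvenPart (p : n.Partition) : Even p.largestEvenPart := by
  by_cases h : p.largestEvenPart = 0
  · simp [h]
  · exact (largestEvenPart_mem h).2

end Nat.Partition

open Nat.Partition

theorem EOcond_iff {n : ℕ} (p : n.Partition) :
    EOcond p ↔ (∀ i ∈ p.parts, Odd i → p.largestEvenPart < i) ∧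
      (∀ i ∈ p.parts, i ≠ p.largestEvenPart → Even (p.parts.count i)) ∧
      (p.largestEvenPart ≠ 0 → Odd (p.parts.count p.largestEvenPart)) := by
  have hmax : ∀ i ∈ p.parts, Even i → (∀ b ∈ p.parts, Even b → b ≤ i) →
      i = p.largestEvenPart := fun i hi he hle ↦ (le_largestEvenPart hi he).antisymm <| by
    by_cases h : p.largestEvenPart = 0
    · omega
    · exact hle _ (largestEvenPart_mem h).1 (largestEvenPart_mem h).2
  constructor
  · rintro ⟨hlt, hcount, hodd⟩
    refine ⟨fun i hi ho ↦ ?_, fun i hi hne ↦ ?_, fun h ↦ ?_⟩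
    · by_cases h : p.largestEvenPart = 0
      · exact h ▸ ho.pos
      · exact hlt _ (largestEvenPart_mem h).1 i hi (largestEvenPart_mem h).2 ho
    · exact (hcount i hi).resolve_right fun ⟨he, hle⟩ ↦ hne (hmax i hi he hle)
    · exact hodd _ (largestEvenPart_mem h).1 (largestEvenPart_mem h).2
        fun b hb he ↦ le_largestEvenPart hb he
  · rintro ⟨hlt, hcount, hodd⟩
    refine ⟨fun i hi j hj he ho ↦ (le_largestEvenPart hi he).trans_lt (hlt j hj ho),
      fun i hi ↦ ?_, fun i hi he hle ↦ ?_⟩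
    · by_cases h : i = p.largestEvenPart
      · exact .inr ⟨h ▸ p.even_largestEvenPart, fun b hb he ↦ h ▸ le_largestEvenPart hb he⟩
      · exact .inl (hcount i hi h)
    · obtain rfl := hmax i hi he hle
      exact hodd (p.parts_pos hi).ne'

abbrev EOAllowedPart (a i : ℕ) : Prop := (Even i → i ≤ 2 * a) ∧ (Odd i → 2 * a < i)

theorem EOcond_and_largestEvenPart_eq_iff {n : ℕ} (p : n.Partition) (a : ℕ) :
    EOcond p ∧ p.largestEvenPart = 2 * a ↔
      (∀ i ∈ p.parts, EOAllowedPart a i ∧ (i ≠ 2 * a → Even (p.parts.count i))) ∧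
        (a ≠ 0 → Odd (p.parts.count (2 * a))) := by
  rw [EOcond_iff]
  constructor
  · rintro ⟨⟨hlt, hcount, hodd⟩, hL⟩
    rw [hL] at hlt hcount hodd
    exact ⟨fun i hi ↦ ⟨⟨hL ▸ le_largestEvenPart hi, hlt i hi⟩, hcount i hi⟩,
      fun ha ↦ hodd (by omega)⟩
  · rintro ⟨hparts, hodd⟩
    have hL : p.largestEvenPart = 2 * a := by
      refine le_antisymm ?_ ?_
      · by_contra h
        obtain ⟨hmem, he⟩ := largestEvenPart_mem (p := p) (by omega)
        exact h ((hparts _ hmem).1.1 he)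
      · rcases eq_or_ne a 0 with rfl | ha
        · simp
        · exact le_largestEvenPart (Multiset.count_pos.mp (hodd ha).pos) (even_two_mul a)
    rw [hL]
    exact ⟨⟨fun i hi ho ↦ (hparts i hi).1.2 ho, fun i hi hne ↦ (hparts i hi).2 hne,
      fun h ↦ hodd (by omega)⟩, rfl⟩

/-- `eoIndex a b + 1` runs through the parts `2, 4, …, 2a, 2a + 1, 2a + 3, …` allowed by
`EOAllowedPart a`. -/
def eoIndex (a b : ℕ) : ℕ := if b < a then 2 * b + 1 else 2 * b

theorem eoIndex_injective (a : ℕ) : Function.Injective (eoIndex a) := by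
  intro b c h
  simp only [eoIndex] at h
  split_ifs at h <;> omega

theorem eoAllowedPart_succ_iff {a i : ℕ} : EOAllowedPart a (i + 1) ↔ ∃ b, eoIndex a b = i := by
  simp only [EOAllowedPart, eoIndex, Nat.even_iff, Nat.odd_iff]
  constructor
  · rintro ⟨he, ho⟩
    rcases Nat.mod_two_eq_zero_or_one (i + 1) with h | h
    · exact ⟨i / 2, by rw [if_pos (by omega)]; omega⟩
    · exact ⟨i / 2, by rw [if_neg (by omega)]; omega⟩
  · rintro ⟨b, rfl⟩
    split_ifs <;> omega

theorem hasProd_eoAllowedPart (a : ℕ) {d : ℕ → ℕ} (hd : ∀ i, Odd i → d i = 2) :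
    HasProd (fun i ↦ if EOAllowedPart a (i + 1) then (1 : ℚ⟦X⟧) - X ^ ((i + 1) * d (i + 1)) else 1)
      ((∏ b ∈ range a, (1 - X ^ ((2 * b + 2) * d (2 * b + 2)))) * qp (2 + 4 * a) 4) := by
  set φ : ℕ → ℚ⟦X⟧ := fun i ↦
    if EOAllowedPart a (i + 1) then 1 - X ^ ((i + 1) * d (i + 1)) else 1
  have hφ : ∀ b, φ (eoIndex a b) = 1 - X ^ ((eoIndex a b + 1) * d (eoIndex a b + 1)) :=
    fun b ↦ if_pos (eoAllowedPart_succ_iff.mpr ⟨b, rfl⟩)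
  have htail : HasProd (fun b ↦ φ (eoIndex a (b + a))) (qp (2 + 4 * a) 4) := by
    convert hasProd_qp (2 + 4 * a) four_pos using 2 with b
    rw [hφ, eoIndex, if_neg (by omega), hd _ (odd_two_mul_add_one _)]
    ring_nf
  rw [← (eoIndex_injective a).hasProd_iff fun i hi ↦
    if_neg fun h ↦ hi (eoAllowedPart_succ_iff.mp h)]
  have hhead : ∏ b ∈ range a, (1 - X ^ ((2 * b + 2) * d (2 * b + 2))) =
      ∏ b ∈ range a, (φ ∘ eoIndex a) b := prod_congr rfl fun b hb ↦ by
    rw [Function.comp_apply, hφ, eoIndex, if_pos (mem_range.mp hb)]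
  rw [hhead]
  exact HasProd.prod_range_mul (f := φ ∘ eoIndex a) htail

theorem ite_one_two_dvd_iff {P : Prop} [Decidable P] {c : ℕ} :
    (if P then 1 else 2) ∣ c ↔ (¬P → Even c) := by
  split_ifs with h <;> simp [h, even_iff_two_dvd]

section Fibers

open scoped Classical

noncomputable def eoFiberGenFun (a : ℕ) : ℚ⟦X⟧ :=
  PowerSeries.mk fun n ↦ #{p : n.Partition | EOcond p ∧ p.largestEvenPart = 2 * a}

noncomputable def eoCountGenFun (a : ℕ) (d : ℕ → ℕ) : ℚ⟦X⟧ :=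
  PowerSeries.mk fun n ↦
    #{p : n.Partition | ∀ i ∈ p.parts, EOAllowedPart a i ∧ d i ∣ p.parts.count i}

theorem card_eoFiber_add_card (a n : ℕ) (ha : a ≠ 0) :
    #{p : n.Partition | EOcond p ∧ p.largestEvenPart = 2 * a} +
      #{p : n.Partition | ∀ i ∈ p.parts, EOAllowedPart a i ∧ 2 ∣ p.parts.count i} =
      #{p : n.Partition | ∀ i ∈ p.parts,
        EOAllowedPart a i ∧ (if i = 2 * a then 1 else 2) ∣ p.parts.count i} := by
  conv_rhs => rw [← card_filter_add_card_filter_not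
    (fun p : n.Partition ↦ Even (p.parts.count (2 * a))), filter_filter, filter_filter, add_comm]
  simp only [ite_one_two_dvd_iff, ← even_iff_two_dvd]
  congr 2
  · refine filter_congr fun p _ ↦ ?_
    rw [EOcond_and_largestEvenPart_eq_iff, Nat.not_even_iff_odd]
    simp [ha]
  · refine filter_congr fun p _ ↦ ⟨fun h ↦ ⟨fun i hi ↦ ⟨(h i hi).1, fun _ ↦ (h i hi).2⟩, ?_⟩,
      fun ⟨h, he⟩ i hi ↦ ⟨(h i hi).1, ?_⟩⟩
    · by_cases hmem : 2 * a ∈ p.parts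
      · exact (h _ hmem).2
      · simp [Multiset.count_eq_zero.mpr hmem]
    · by_cases hi' : i = 2 * a
      · exact hi' ▸ he
      · exact (h i hi).2 hi'

theorem eoCountGenFun_mul (a : ℕ) {d : ℕ → ℕ} (hd0 : ∀ i, 0 < d i) (hd : ∀ i, Odd i → d i = 2) :
    eoCountGenFun a d *
      ((∏ b ∈ range a, (1 - X ^ ((2 * b + 2) * d (2 * b + 2)))) * qp (2 + 4 * a) 4) = 1 :=
  Nat.Partition.powerSeriesMk_card_dvd_count_mul_eq_one _ hd0 (hasProd_eoAllowedPart a hd)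

theorem eoFiberGenFun_zero : eoFiberGenFun 0 = eoCountGenFun 0 fun _ ↦ 2 := by
  ext n
  rw [eoFiberGenFun, eoCountGenFun, coeff_mk, coeff_mk]
  congr 2
  refine filter_congr fun p _ ↦ ?_
  rw [EOcond_and_largestEvenPart_eq_iff]
  simp only [mul_zero, ne_eq, not_true_eq_false, IsEmpty.forall_iff, and_true, even_iff_two_dvd]
  exact forall₂_congr fun i hi ↦ and_congr_right' ⟨fun h ↦ h (p.parts_pos hi).ne', fun h _ ↦ h⟩

theorem eoFiberGenFun_eq_sub {a : ℕ} (ha : a ≠ 0) :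
    eoFiberGenFun a =
      eoCountGenFun a (fun i ↦ if i = 2 * a then 1 else 2) - eoCountGenFun a fun _ ↦ 2 := by
  ext n
  rw [eoFiberGenFun, eoCountGenFun, eoCountGenFun, map_sub, coeff_mk, coeff_mk, coeff_mk,
    ← card_eoFiber_add_card a n ha]
  push_cast
  ring

theorem eoFiberGenFun_mul (a : ℕ) :
    eoFiberGenFun a * (qPochhammer (X ^ 4) (X ^ 4) a * qp (2 + 4 * a) 4) = (X ^ 2) ^ a := by
  have hpe : ∀ k, ∏ b ∈ range k, (1 - (X : ℚ⟦X⟧) ^ ((2 * b + 2) * 2)) =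
      qPochhammer (X ^ 4) (X ^ 4) k := fun k ↦ by
    rw [qPochhammer_X_pow]
    exact prod_congr rfl fun b _ ↦ by ring_nf
  have hH := eoCountGenFun_mul a (d := fun _ ↦ 2) (fun _ ↦ two_pos) fun _ _ ↦ rfl
  rw [hpe] at hH
  rcases eq_or_ne a 0 with rfl | ha
  · rwa [pow_zero, eoFiberGenFun_zero]
  obtain ⟨a, rfl⟩ := Nat.exists_eq_add_one_of_ne_zero ha
  have hG := eoCountGenFun_mul (a + 1) (d := fun i ↦ if i = 2 * (a + 1) then 1 else 2)
    (fun _ ↦ by split_ifs <;> norm_num)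
    fun i hi ↦ if_neg fun h ↦ Nat.not_odd_iff_even.mpr (h ▸ even_two_mul _) hi
  have hhead : ∏ b ∈ range a,
      (1 - (X : ℚ⟦X⟧) ^ ((2 * b + 2) * if 2 * b + 2 = 2 * (a + 1) then 1 else 2)) =
      qPochhammer (X ^ 4) (X ^ 4) a := by
    rw [← hpe]
    exact prod_congr rfl fun b hb ↦ by rw [if_neg (by have := mem_range.mp hb; omega)]
  rw [prod_range_succ, if_pos (by ring), hhead] at hG
  rw [eoFiberGenFun_eq_sub ha, qPochhammer_succ]
  rw [qPochhammer_succ] at hH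
  linear_combination (1 + X ^ (2 * a + 2)) * hG - hH

theorem hasSum_eoFiberGenFun :
    HasSum eoFiberGenFun (PowerSeries.mk fun n ↦ (EObar n : ℚ)) := by
  refine (hasSum_iff_hasSum_coeff ℚ).mpr fun n ↦ ?_
  have hle : ∀ p : n.Partition, p.largestEvenPart ≤ n := fun p ↦ by
    by_cases h : p.largestEvenPart = 0
    · omega
    · exact le_of_mem_parts (largestEvenPart_mem h).1
  have hfib : EObar n = ∑ a ∈ range (n + 1),
      #{p : n.Partition | EOcond p ∧ p.largestEvenPart = 2 * a} := by
    rw [EObar, Nat.card_eq_fintype_card, Fintype.card_subtype,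
      card_eq_sum_card_fiberwise (f := fun p ↦ p.largestEvenPart / 2) (t := range (n + 1))
        fun p _ ↦ by have := hle p; simp only [coe_range, Set.mem_Iio]; omega]
    refine sum_congr rfl fun a _ ↦ ?_
    rw [filter_filter]
    refine congrArg card (filter_congr fun p _ ↦ and_congr_right' ?_)
    obtain ⟨k, hk⟩ := p.even_largestEvenPart
    omega
  simp only [eoFiberGenFun, coeff_mk, hfib, Nat.cast_sum]
  refine hasSum_sum_of_ne_finset_zero fun a ha ↦ ?_
  rw [Nat.cast_eq_zero, card_eq_zero, filter_eq_empty_iff]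
  rintro p - ⟨-, hL⟩
  have := hle p
  simp only [mem_range] at ha
  omega

end Fibers

theorem qp_two_four_mul_eoFiberGenFun (a : ℕ) :
    qp 2 4 * eoFiberGenFun a =
      (X ^ 2) ^ a * qPochhammer (X ^ 2) (X ^ 4) a * (qPochhammer (X ^ 4) (X ^ 4) a)⁻¹ := by
  have hinv : qPochhammer (X ^ 4 : ℚ⟦X⟧) (X ^ 4) a * (qPochhammer (X ^ 4) (X ^ 4) a)⁻¹ = 1 :=
    PowerSeries.mul_inv_cancel _ (by simp [constantCoeff_qPochhammer])
  rw [qp_eq_qPochhammer_mul 2 a four_pos]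
  linear_combination (qPochhammer (X ^ 2) (X ^ 4) a * (qPochhammer (X ^ 4) (X ^ 4) a)⁻¹) *
    eoFiberGenFun_mul a -
      qPochhammer (X ^ 2) (X ^ 4) a * qp (2 + 4 * a) 4 * eoFiberGenFun a * hinv

/-- Andrews: `∑_{n≥0} EObar(n) qⁿ = (q⁴;q⁴)_∞³ / (q²;q²)_∞²`. -/
theorem EObar_generating_function :
    PowerSeries.mk (fun n => (EObar n : ℚ)) = qp 4 4 ^ 3 * (qp 2 2 ^ 2)⁻¹ := by
  have hbin := mul_qBinomialSeries_eq (X ^ 2 : ℚ⟦X⟧) (q := X ^ 4) (z := X ^ 2) (by simp)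
    (by simp) (tendsto_qPochhammer_qp 2 four_pos)
    (by simpa [← pow_add] using tendsto_qPochhammer_qp 4 four_pos)
  have hsum := hasSum_eoFiberGenFun.mul_left (qp 2 4)
  simp only [qp_two_four_mul_eoFiberGenFun] at hsum
  rw [qBinomialSeries, hsum.tsum_eq] at hbin
  rw [PowerSeries.eq_mul_inv_iff_mul_eq (by simp [constantCoeff_qp]), qp_two_two]
  linear_combination qp 4 4 ^ 2 * hbin
end

section
/- The generating function of EO-bar satisfies ∑_{n≥0} EO-bar(n) q^n ≡ (q;q)_∞^8 (mod 2), i.e., the coefficients of the two power series agree modulo 2. -/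
open PowerSeries

/-!
In characteristic 2 the Frobenius gives `(q^a;q^c)_∞² = (q^{2a};q^{2c})_∞`, so modulo 2
`(q²;q²)_∞² ≡ (q⁴;q⁴)_∞` and `(q;q)_∞⁸ ≡ (q⁴;q⁴)_∞²`, whence
`(q⁴;q⁴)_∞³ / (q²;q²)_∞² ≡ (q⁴;q⁴)_∞² ≡ (q;q)_∞⁸`.
To reduce modulo 2, the identity is first cleared of its denominator over `ℚ` and then read
over `ℤ`, where all the products live.
-/

open Finset

section

variable (R : Type*) [CommRing R]

noncomputable def qProd (a c : ℕ) : R⟦X⟧ :=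
  mk fun n => coeff n (∏ i ∈ range (n + 1), (1 - (X : R⟦X⟧) ^ (a + c * i)))

theorem qp_eq_qProd (a c : ℕ) : qp a c = qProd ℚ a c := rfl

variable {R}

theorem map_qProd {S : Type*} [CommRing S] (f : R →+* S) (a c : ℕ) :
    map f (qProd R a c) = qProd S a c := by
  ext n
  rw [coeff_map, qProd, qProd, coeff_mk, coeff_mk, ← coeff_map, map_prod]
  simp

variable {a c : ℕ}

theorem coeff_prod_range_eq_of_lt (hc : c ≠ 0) {n N : ℕ} (hN : n < N) :
    coeff n (∏ i ∈ range N, (1 - (X : R⟦X⟧) ^ (a + c * i))) =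
      coeff n (∏ i ∈ range (n + 1), (1 - (X : R⟦X⟧) ^ (a + c * i))) := by
  induction N, hN using Nat.le_induction with
  | base => rfl
  | succ N hN ih =>
    have hlt : n < a + c * N := by nlinarith [Nat.one_le_iff_ne_zero.mpr hc]
    rw [prod_range_succ, mul_sub, mul_one, map_sub, coeff_mul_X_pow', if_neg hlt.not_ge,
      sub_zero, ih]

theorem X_pow_dvd_qProd_sub_prod (hc : c ≠ 0) (N : ℕ) :
    (X : R⟦X⟧) ^ N ∣ qProd R a c - ∏ i ∈ range N, (1 - (X : R⟦X⟧) ^ (a + c * i)) := by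
  refine X_pow_dvd_iff.mpr fun n hn => ?_
  rw [map_sub, coeff_prod_range_eq_of_lt hc hn, qProd, coeff_mk, sub_self]

theorem constantCoeff_qProd (ha : a ≠ 0) (c : ℕ) : constantCoeff (qProd R a c) = 1 := by
  rw [← coeff_zero_eq_constantCoeff_apply, qProd, coeff_mk, coeff_zero_eq_constantCoeff_apply]
  simp [ha]

theorem isUnit_qProd (ha : a ≠ 0) (c : ℕ) : IsUnit (qProd R a c) :=
  isUnit_iff_constantCoeff.mpr (by rw [constantCoeff_qProd ha]; exact isUnit_one)

theorem qProd_pow_char (p : ℕ) [Fact p.Prime] [CharP R p] (hc : c ≠ 0) :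
    qProd R a c ^ p = qProd R (p * a) (p * c) := by
  have : CharP R⟦X⟧ p := charP_of_injective_ringHom (C_injective (R := R)) p
  refine eq_of_sub_eq_zero <| ext fun n => ?_
  set P := ∏ i ∈ range (n + 1), (1 - (X : R⟦X⟧) ^ (a + c * i))
  have hP : P ^ p = ∏ i ∈ range (n + 1), (1 - (X : R⟦X⟧) ^ (p * a + p * c * i)) := by
    simp only [P, ← prod_pow, sub_pow_char, one_pow, ← pow_mul]
    congr! 3
    ring
  have hdvd : (X : R⟦X⟧) ^ (n + 1) ∣ qProd R a c ^ p - qProd R (p * a) (p * c) := by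
    have h1 := (X_pow_dvd_qProd_sub_prod hc (n + 1)).trans (sub_dvd_pow_sub_pow _ P p)
    have h2 := X_pow_dvd_qProd_sub_prod (R := R) (a := p * a)
      (mul_ne_zero (Fact.out : p.Prime).ne_zero hc) (n + 1)
    rw [← hP] at h2
    simpa using dvd_sub h1 h2
  simpa using X_pow_dvd_iff.mp hdvd n n.lt_succ_self

end

theorem eq_qProd_one_one_pow_eight_of_mul_eq {E : (ZMod 2)⟦X⟧}
    (hE : E * qProd (ZMod 2) 2 2 ^ 2 = qProd (ZMod 2) 4 4 ^ 3) :
    E = qProd (ZMod 2) 1 1 ^ 8 := by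
  have h11 : qProd (ZMod 2) 1 1 ^ 2 = qProd (ZMod 2) 2 2 := qProd_pow_char 2 one_ne_zero
  have h22 : qProd (ZMod 2) 2 2 ^ 2 = qProd (ZMod 2) 4 4 := qProd_pow_char 2 two_ne_zero
  have hE' : E * qProd (ZMod 2) 4 4 = qProd (ZMod 2) 4 4 ^ 2 * qProd (ZMod 2) 4 4 := by
    rw [← h22, hE, h22, pow_succ]
  rw [(isUnit_qProd four_ne_zero 4).mul_left_inj.mp hE', ← h22, ← h11]
  ring

theorem exists_sub_eq_two_mul_of_map_zmod_two_eq {f g : ℤ⟦X⟧}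
    (h : map (Int.castRingHom (ZMod 2)) f = map (Int.castRingHom (ZMod 2)) g) (n : ℕ) :
    ∃ m : ℤ, coeff n f - coeff n g = 2 * m := by
  have hn := congrArg (coeff n) h
  simp only [coeff_map, eq_intCast] at hn
  exact (ZMod.intCast_eq_intCast_iff_dvd_sub _ _ 2).mp hn.symm

/-- `∑ EObar(n) qⁿ ≡ (q;q)_∞⁸ (mod 2)`: the coefficients agree modulo 2. -/
theorem EObar_cong_mod_two (EObar : ℕ → ℕ)
    (hEO : PowerSeries.mk (fun n => (EObar n : ℚ)) = qp 4 4 ^ 3 * (qp 2 2 ^ 2)⁻¹) :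
    ∀ n : ℕ, ∃ m : ℤ,
      (EObar n : ℚ) - PowerSeries.coeff n (qp 1 1 ^ 8) = 2 * m := by
  set E : ℤ⟦X⟧ := mk fun n => (EObar n : ℤ)
  have hEℚ : map (Int.castRingHom ℚ) E = mk fun n => (EObar n : ℚ) := by ext; simp [E]
  have hEℤ : E * qProd ℤ 2 2 ^ 2 = qProd ℤ 4 4 ^ 3 := by
    have hunit : constantCoeff (qp 2 2 ^ 2) ≠ 0 := by
      simp [qp_eq_qProd, constantCoeff_qProd]
    refine map_injective _ (Int.castRingHom ℚ).injective_int ?_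
    rw [map_mul, map_pow, map_pow, map_qProd, map_qProd, hEℚ, ← qp_eq_qProd, ← qp_eq_qProd, hEO,
      mul_assoc, PowerSeries.inv_mul_cancel _ hunit, mul_one]
  have hE2 : map (Int.castRingHom (ZMod 2)) E =
      map (Int.castRingHom (ZMod 2)) (qProd ℤ 1 1 ^ 8) := by
    rw [map_pow, map_qProd]
    refine eq_qProd_one_one_pow_eight_of_mul_eq ?_
    simpa only [map_mul, map_pow, map_qProd] using congrArg (map (Int.castRingHom (ZMod 2))) hEℤ
  intro n
  obtain ⟨m, hm⟩ := exists_sub_eq_two_mul_of_map_zmod_two_eq hE2 n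
  refine ⟨m, ?_⟩
  rw [qp_eq_qProd, ← map_qProd (Int.castRingHom ℚ), ← map_pow, coeff_map, eq_intCast]
  rw [coeff_mk] at hm
  exact_mod_cast hm
end

section
/- Let p ≥ 5 be a prime with p ≡ 2 (mod 3). Then for all nonnegative integers n, EO-bar(p^2 n + (p^2 - 1)/3) ≡ EO-bar(n) (mod 2). -/
open PowerSeries

/-!
Modulo 2 the Frobenius gives `(q^{2d}; q^{2d})_∞ ≡ (q^d; q^d)_∞²`, so the generating function
`(q⁴; q⁴)³ / (q²; q²)²` of `EObar` reduces to `(q⁸; q⁸)_∞`. By Euler's pentagonal number theorem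
the coefficient of `q^N` in `(q⁸; q⁸)_∞` is odd exactly when `8 ∣ N` and `3N + 1` is a square.
For a prime `p ≥ 5` we have `p² ≡ 1 (mod 24)`, so `n ↦ p²n + (p² - 1)/3` preserves divisibility
by `8` and multiplies `3n + 1` by `p²`, which preserves being a square.
-/

open Finset

noncomputable def qPoch (R : Type*) [CommRing R] (a c : ℕ) : R⟦X⟧ :=
  mk fun n => coeff n (∏ i ∈ range (n + 1), (1 - (X : R⟦X⟧) ^ (a + c * i)))

theorem qp_eq_qPoch : qp = qPoch ℚ := rfl

namespace PowerSeries

variable {R : Type*} [CommRing R]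

theorem map_mk {S : Type*} [CommRing S] (φ : R →+* S) (f : ℕ → R) :
    map φ (mk f) = mk (φ ∘ f) := by
  ext
  simp

theorem coeff_mul_one_sub_X_pow (f : R⟦X⟧) {m k : ℕ} (h : m < k) :
    coeff m (f * (1 - X ^ k)) = coeff m f := by
  rw [mul_sub, mul_one, map_sub, coeff_mul_X_pow', if_neg (by omega), sub_zero]

theorem coeff_prod_range_one_sub_X_pow_of_le {m M M' : ℕ} (hm : m < M) (hM : M ≤ M') :
    coeff m (∏ i ∈ range M', (1 - X ^ (i + 1) : R⟦X⟧)) =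
      coeff m (∏ i ∈ range M, (1 - X ^ (i + 1) : R⟦X⟧)) := by
  induction M', hM using Nat.le_induction with
  | base => rfl
  | succ M' hM ih => rw [prod_range_succ, coeff_mul_one_sub_X_pow _ (by omega), ih]

theorem coeff_prod_range_one_sub_X_pow {m M : ℕ} (hm : m < M) :
    coeff m (∏ i ∈ range M, (1 - X ^ (i + 1) : R⟦X⟧)) = coeff m (pentagonalSeries R) := by
  obtain ⟨M₀, hM₀⟩ := (Filter.tendsto_finset_range.eventually
    (coeff_prod_one_sub_X_pow_eventually_eq R m)).exists_forall_of_atTop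
  rw [← coeff_prod_range_one_sub_X_pow_of_le hm (le_max_left M M₀), hM₀ _ (le_max_right M M₀)]

theorem constantCoeff_pentagonalSeries : constantCoeff (pentagonalSeries R) = 1 := by
  have h := coeff_pentagonalSeries_pentagonal R 0
  rw [show pentagonal 0 = 0 from rfl, coeff_zero_eq_constantCoeff_apply] at h
  simpa using h

theorem pow_pow_eq_expand {p : ℕ} [hp : Fact p.Prime] (f : (ZMod p)⟦X⟧) (k : ℕ) :
    f ^ p ^ k = expand (p ^ k) (pow_ne_zero k hp.out.ne_zero) f := by
  have hid : iterateFrobenius (ZMod p) p k = RingHom.id _ := by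
    ext x
    exact ZMod.pow_card_pow x
  rw [← MvPowerSeries.map_iterateFrobenius_expand p hp.out.ne_zero f k, hid, MvPowerSeries.map_id]
  rfl

end PowerSeries

section qPoch

variable {R : Type*} [CommRing R]

theorem map_qPoch {S : Type*} [CommRing S] (φ : R →+* S) (a c : ℕ) :
    map φ (qPoch R a c) = qPoch S a c := by
  ext n
  rw [coeff_map, qPoch, qPoch, coeff_mk, coeff_mk, ← coeff_map]
  simp only [map_prod, map_sub, map_one, map_pow, map_X]

theorem qPoch_self_eq_expand {d : ℕ} (hd : d ≠ 0) :
    qPoch R d d = expand d hd (pentagonalSeries R) := by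
  ext n
  have hprod : ∏ i ∈ range (n + 1), (1 - (X : R⟦X⟧) ^ (d + d * i)) =
      expand d hd (∏ i ∈ range (n + 1), (1 - X ^ (i + 1))) := by
    simp only [map_prod, map_sub, map_one, map_pow, expand_X, ← pow_mul, mul_add, mul_one,
      add_comm d]
  rw [qPoch, coeff_mk, hprod, coeff_expand, coeff_expand,
    coeff_prod_range_one_sub_X_pow (Nat.lt_succ_of_le (Nat.div_le_self n d))]

theorem qPoch_pow_eq_pentagonalSeries_pow {p : ℕ} [hp : Fact p.Prime] (k : ℕ) :
    qPoch (ZMod p) (p ^ k) (p ^ k) = pentagonalSeries (ZMod p) ^ p ^ k := by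
  rw [qPoch_self_eq_expand (pow_ne_zero k hp.out.ne_zero), pow_pow_eq_expand]

/-- All the series involved have integer coefficients, so the identity descends to `ℤ⟦X⟧`
and from there maps to any commutative ring. -/
theorem mul_qPoch_eq_of_eq_mul_inv (e : ℕ → ℕ)
    (h : mk (fun n => (e n : ℚ)) = qp 4 4 ^ 3 * (qp 2 2 ^ 2)⁻¹) :
    mk (fun n => (e n : R)) * qPoch R 2 2 ^ 2 = qPoch R 4 4 ^ 3 := by
  have hunit : constantCoeff (qPoch ℚ 2 2 ^ 2) ≠ 0 := by
    rw [map_pow, qPoch_self_eq_expand two_ne_zero, constantCoeff_expand,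
      constantCoeff_pentagonalSeries]
    exact one_ne_zero (α := ℚ) ∘ (pow_eq_zero_iff two_ne_zero).mp
  have hQ : mk (fun n => (e n : ℚ)) * qPoch ℚ 2 2 ^ 2 = qPoch ℚ 4 4 ^ 3 := by
    rw [h, qp_eq_qPoch, mul_assoc, PowerSeries.inv_mul_cancel _ hunit, mul_one]
  have hZ : mk (fun n => (e n : ℤ)) * qPoch ℤ 2 2 ^ 2 = qPoch ℤ 4 4 ^ 3 := by
    apply map_injective (Int.castRingHom ℚ) Int.cast_injective
    simpa only [map_mul, map_pow, map_qPoch, map_mk, Function.comp_def, map_natCast] using hQ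
  simpa only [map_mul, map_pow, map_qPoch, map_mk, Function.comp_def, map_natCast] using
    congrArg (map (Int.castRingHom R)) hZ

theorem eq_expand_eight_of_mul_qPoch_eq {E : (ZMod 2)⟦X⟧}
    (h : E * qPoch (ZMod 2) 2 2 ^ 2 = qPoch (ZMod 2) 4 4 ^ 3) :
    E = expand 8 (by norm_num) (pentagonalSeries (ZMod 2)) := by
  have hP : pentagonalSeries (ZMod 2) ^ 4 ≠ 0 := pow_ne_zero 4 <| ne_zero_of_map
    (f := constantCoeff) (by rw [constantCoeff_pentagonalSeries]; exact one_ne_zero)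
  have h2 := qPoch_pow_eq_pentagonalSeries_pow (p := 2) 1
  have h4 := qPoch_pow_eq_pentagonalSeries_pow (p := 2) 2
  norm_num at h2 h4
  rw [h2, h4] at h
  have h' : E * pentagonalSeries (ZMod 2) ^ 4 =
      pentagonalSeries (ZMod 2) ^ 8 * pentagonalSeries (ZMod 2) ^ 4 := by
    linear_combination h
  rw [mul_right_cancel₀ hP h']
  exact pow_pow_eq_expand _ 3

end qPoch

theorem mem_range_pentagonal_iff (m : ℕ) :
    m ∈ Set.range pentagonal ↔ IsSquare (24 * m + 1) := by
  constructor
  · rintro ⟨k, rfl⟩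
    refine ⟨(6 * k - 1).natAbs, Nat.cast_injective (R := ℤ) ?_⟩
    push_cast
    rw [abs_mul_abs_self]
    linear_combination 12 * two_mul_natCast_pentagonal k
  · rintro ⟨r, hr⟩
    obtain ⟨j, i, hi, rfl⟩ : ∃ j i, i < 6 ∧ r = 6 * j + i :=
      ⟨r / 6, r % 6, Nat.mod_lt r (by norm_num), (Nat.div_add_mod r 6).symm⟩
    ring_nf at hr
    interval_cases i <;> zify at hr
    · omega
    · exact ⟨-(j : ℤ), by linarith [two_mul_natCast_pentagonal_neg j]⟩
    · omega
    · omega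
    · omega
    · exact ⟨(j : ℤ) + 1, by linarith [two_mul_natCast_pentagonal ((j : ℤ) + 1)]⟩

theorem coeff_pentagonalSeries_zmod_two (m : ℕ) :
    coeff m (pentagonalSeries (ZMod 2)) = if IsSquare (24 * m + 1) then 1 else 0 := by
  by_cases h : m ∈ Set.range pentagonal
  · rw [if_pos ((mem_range_pentagonal_iff m).mp h)]
    obtain ⟨k, rfl⟩ := h
    rw [coeff_pentagonalSeries_pentagonal]
    rcases Int.units_eq_one_or k.negOnePow with h | h <;> simp [h]
  · rw [if_neg ((mem_range_pentagonal_iff m).not.mp h)]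
    exact coeff_pentagonalSeries_eq_zero _ h

theorem coeff_expand_eight_pentagonalSeries_zmod_two (N : ℕ) :
    coeff N (expand 8 (by norm_num) (pentagonalSeries (ZMod 2))) =
      if 8 ∣ N ∧ IsSquare (3 * N + 1) then 1 else 0 := by
  rw [coeff_expand]
  by_cases h8 : 8 ∣ N
  · obtain ⟨g, rfl⟩ := h8
    rw [coeff_pentagonalSeries_zmod_two, Nat.mul_div_cancel_left g (by norm_num),
      show 3 * (8 * g) + 1 = 24 * g + 1 by ring]
    simp
  · simp [h8]

theorem Nat.isSquare_sq_mul_iff {a x : ℕ} (ha : a ≠ 0) : IsSquare (a ^ 2 * x) ↔ IsSquare x := by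
  refine ⟨fun ⟨r, hr⟩ => ?_, (IsSquare.sq a).mul⟩
  obtain ⟨s, rfl⟩ : a ∣ r := (Nat.pow_dvd_pow_iff two_ne_zero).mp ⟨x, by rw [sq r, ← hr]⟩
  refine ⟨s, Nat.eq_of_mul_eq_mul_left (pow_pos (Nat.pos_of_ne_zero ha) 2) ?_⟩
  rw [hr]
  ring

theorem Nat.Prime.sq_mod_twentyFour {p : ℕ} (hp : p.Prime) (hp5 : 5 ≤ p) : p ^ 2 % 24 = 1 := by
  have h2 : p % 2 = 1 := Nat.odd_iff.mp (hp.odd_of_ne_two (by omega))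
  have h3 : p % 3 ≠ 0 := fun h => by
    have := (Nat.prime_dvd_prime_iff_eq Nat.prime_three hp).mp (Nat.dvd_of_mod_eq_zero h)
    omega
  rw [Nat.pow_mod]
  have : p % 24 < 24 := Nat.mod_lt p (by norm_num)
  interval_cases h : p % 24 <;> omega

theorem eight_dvd_mul_add_sub_one_div_three_iff {q n : ℕ} (hq : q % 24 = 1) :
    8 ∣ q * n + (q - 1) / 3 ↔ 8 ∣ n := by
  obtain ⟨t, rfl⟩ : ∃ t, q = 24 * t + 1 := ⟨q / 24, by omega⟩
  rw [show (24 * t + 1) * n + (24 * t + 1 - 1) / 3 = 8 * (3 * t * n + t) + n by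
    rw [Nat.add_sub_cancel, show 24 * t = 3 * (8 * t) by ring,
      Nat.mul_div_cancel_left _ (by norm_num)]
    ring]
  exact Nat.dvd_add_right (dvd_mul_right 8 _)

theorem three_mul_mul_add_sub_one_div_three {q n : ℕ} (hq : q % 3 = 1) :
    3 * (q * n + (q - 1) / 3) + 1 = q * (3 * n + 1) := by
  obtain ⟨t, rfl⟩ : ∃ t, q = 3 * t + 1 := ⟨q / 3, by omega⟩
  rw [Nat.add_sub_cancel, Nat.mul_div_cancel_left _ (by norm_num)]
  ring

theorem EObar_mod_two_invariance_general (EObar : ℕ → ℕ)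
    (hEO : PowerSeries.mk (fun n => (EObar n : ℚ)) = qp 4 4 ^ 3 * (qp 2 2 ^ 2)⁻¹)
    (p : ℕ) (hp : p.Prime) (hp5 : 5 ≤ p) (n : ℕ) :
    EObar (p ^ 2 * n + (p ^ 2 - 1) / 3) % 2 = EObar n % 2 := by
  have hE (N : ℕ) : (EObar N : ZMod 2) = if 8 ∣ N ∧ IsSquare (3 * N + 1) then 1 else 0 := by
    rw [← coeff_expand_eight_pentagonalSeries_zmod_two,
      ← eq_expand_eight_of_mul_qPoch_eq (mul_qPoch_eq_of_eq_mul_inv EObar hEO), coeff_mk]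
  have hp24 := hp.sq_mod_twentyFour hp5
  rw [← ZMod.natCast_eq_natCast_iff', hE, hE]
  simp only [eight_dvd_mul_add_sub_one_div_three_iff hp24,
    three_mul_mul_add_sub_one_div_three (by omega : p ^ 2 % 3 = 1),
    Nat.isSquare_sq_mul_iff hp.ne_zero]

/-- For a prime `p ≥ 5` with `p ≡ 2 (mod 3)`:
`EObar(p²n + (p²-1)/3) ≡ EObar(n) (mod 2)`. -/
theorem EObar_mod_two_invariance (EObar : ℕ → ℕ)
    (hEO : PowerSeries.mk (fun n => (EObar n : ℚ)) = qp 4 4 ^ 3 * (qp 2 2 ^ 2)⁻¹)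
    (p : ℕ) (hp : p.Prime) (hp5 : 5 ≤ p) (hp3 : p % 3 = 2) (n : ℕ) :
    EObar (p ^ 2 * n + (p ^ 2 - 1) / 3) % 2 = EObar n % 2 :=
  EObar_mod_two_invariance_general EObar hEO p hp hp5 n
end

section
/- Let p ≥ 5 be a prime with p ≡ 2 (mod 3). Then for all nonnegative integers n and all integers j with p ∤ j, EO-bar(p^2 n + (p^2-1)/3 + pj) ≡ 0 (mod 2). -/
open PowerSeries

/-!
Modulo 2, squaring acts on `(q^a; q^c)_∞` as the substitution `q ↦ q²`, so
`(q²; q²)_∞² ≡ (q⁴; q⁴)_∞` and the generating function of `EObar` reduces to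
`(q⁴; q⁴)_∞² ≡ (q⁸; q⁸)_∞`. By Euler's pentagonal number theorem the coefficient of `q^N` in
`(q⁸; q⁸)_∞` vanishes unless `N = 8 k(3k-1)/2`, which forces `3N + 1 = (6k-1)²`. For
`N = p²n + (p²-1)/3 + pj` we have `3N + 1 = p (p(3n+1) + 3j)` and `p ∤ p(3n+1) + 3j`, so `3N + 1`
is not a square.
-/

open Finset

noncomputable def qpoch (R : Type*) [CommRing R] (a c : ℕ) : R⟦X⟧ :=
  PowerSeries.mk fun n => coeff n (∏ i ∈ range (n + 1), (1 - X ^ (a + c * i) : R⟦X⟧))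

theorem qp_eq_qpoch (a c : ℕ) : qp a c = qpoch ℚ a c := rfl

section qpoch

variable {R S : Type*} [CommRing R] [CommRing S] {a c : ℕ}

theorem coeff_prod_range_eq_coeff_qpoch (hc : 0 < c) {n m : ℕ} (hnm : n < m) :
    coeff n (∏ i ∈ range m, (1 - X ^ (a + c * i) : R⟦X⟧)) = coeff n (qpoch R a c) := by
  rw [qpoch, coeff_mk]
  induction m, hnm using Nat.le_induction with
  | base => rfl
  | succ m hm ih =>
    rw [prod_range_succ, mul_sub, mul_one, map_sub, coeff_mul_X_pow', if_neg (by nlinarith),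
      sub_zero, ih]

theorem map_qpoch (f : R →+* S) (a c : ℕ) : map f (qpoch R a c) = qpoch S a c := by
  ext n
  rw [coeff_map, qpoch, qpoch, coeff_mk, coeff_mk, ← coeff_map, map_prod]
  simp

theorem constantCoeff_qpoch (ha : 0 < a) (c : ℕ) : constantCoeff (qpoch R a c) = 1 := by
  rw [← coeff_zero_eq_constantCoeff_apply, qpoch, coeff_mk]
  simp [zero_pow ha.ne']

theorem expand_qpoch {k : ℕ} (hk : k ≠ 0) (hc : 0 < c) :
    expand k hk (qpoch R a c) = qpoch R (k * a) (k * c) := by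
  ext n
  have hprod : (∏ i ∈ range (n + 1), (1 - X ^ (k * a + k * c * i) : R⟦X⟧))
      = expand k hk (∏ i ∈ range (n + 1), (1 - X ^ (a + c * i))) := by
    simp [map_prod, ← pow_mul, mul_add, mul_assoc]
  rw [← coeff_prod_range_eq_coeff_qpoch (by positivity) n.lt_succ_self, hprod,
    coeff_expand, coeff_expand]
  split_ifs
  · exact (coeff_prod_range_eq_coeff_qpoch hc (Nat.lt_succ_of_le (Nat.div_le_self n k))).symm
  · rfl

theorem qpoch_one_one : qpoch R 1 1 = pentagonalSeries R := by
  ext n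
  obtain ⟨m, hm⟩ := Filter.eventually_atTop.mp
    (Filter.tendsto_finset_range.eventually (coeff_prod_one_sub_X_pow_eventually_eq R n))
  rw [← hm (max m (n + 1)) (le_max_left _ _), ← coeff_prod_range_eq_coeff_qpoch one_pos
    (n.lt_succ_self.trans_le (le_max_right m _))]
  simp [add_comm]

end qpoch

theorem PowerSeries.expand_zmod_eq_pow (p : ℕ) [Fact p.Prime] (f : (ZMod p)⟦X⟧) :
    expand p (Fact.out : p.Prime).ne_zero f = f ^ p := by
  have := MvPowerSeries.map_frobenius_expand p (Fact.out : p.Prime).ne_zero (f := f)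
  rw [ZMod.frobenius_zmod, MvPowerSeries.map_id] at this
  exact this

theorem PowerSeries.map_mk_s6 {R S : Type*} [CommRing R] [CommRing S] (f : R →+* S) (g : ℕ → R) :
    map f (mk g) = mk (f ∘ g) := by
  ext n
  simp

theorem mk_natCast_mul_qpoch_pow_eq {R : Type*} [CommRing R] (e : ℕ → ℕ) {a c k a' c' l : ℕ}
    (h : mk (fun n => (e n : ℚ)) * qpoch ℚ a c ^ k = qpoch ℚ a' c' ^ l) :
    mk (fun n => (e n : R)) * qpoch R a c ^ k = qpoch R a' c' ^ l := by
  have hℤ : mk (fun n => (e n : ℤ)) * qpoch ℤ a c ^ k = qpoch ℤ a' c' ^ l := by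
    apply map_injective (Int.castRingHom ℚ) Int.cast_injective
    simpa [map_qpoch, map_mk_s6, Function.comp_def] using h
  simpa [map_qpoch, map_mk_s6, Function.comp_def] using congrArg (map (Int.castRingHom R)) hℤ

theorem qpoch_zmod_two_sq (a : ℕ) {c : ℕ} (hc : 0 < c) :
    qpoch (ZMod 2) a c ^ 2 = qpoch (ZMod 2) (2 * a) (2 * c) := by
  rw [← expand_zmod_eq_pow, expand_qpoch _ hc]

theorem mk_mod_two_eq_expand_pentagonalSeries (e : ℕ → ℕ)
    (he : mk (fun n => (e n : ℚ)) = qp 4 4 ^ 3 * (qp 2 2 ^ 2)⁻¹) :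
    mk (fun n => (e n : ZMod 2)) = expand 8 (by norm_num) (pentagonalSeries (ZMod 2)) := by
  have hunit : constantCoeff (qpoch ℚ 2 2 ^ 2) ≠ 0 := by simp [constantCoeff_qpoch]
  have hℚ : mk (fun n => (e n : ℚ)) * qpoch ℚ 2 2 ^ 2 = qpoch ℚ 4 4 ^ 3 := by
    rw [he, qp_eq_qpoch, qp_eq_qpoch, mul_assoc, PowerSeries.inv_mul_cancel _ hunit, mul_one]
  have hmod2 := mk_natCast_mul_qpoch_pow_eq (R := ZMod 2) e hℚ
  have h22 : qpoch (ZMod 2) 2 2 ^ 2 = qpoch (ZMod 2) 4 4 := qpoch_zmod_two_sq 2 two_pos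
  have h88 : expand 8 (by norm_num) (pentagonalSeries (ZMod 2)) = qpoch (ZMod 2) 4 4 ^ 2 := by
    rw [← qpoch_one_one, expand_qpoch _ one_pos, qpoch_zmod_two_sq 4 four_pos]
    rfl
  rw [h22] at hmod2
  have h44 : qpoch (ZMod 2) 4 4 ≠ 0 := fun h0 => by
    simpa [h0] using constantCoeff_qpoch (R := ZMod 2) four_pos 4
  apply mul_right_cancel₀ h44
  rw [hmod2, h88]
  ring

theorem isSquare_twentyFour_mul_pentagonal_add_one (k : ℤ) :
    IsSquare (24 * pentagonal k + 1) := by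
  refine ⟨(6 * k - 1).natAbs, Int.ofNat_inj.mp ?_⟩
  push_cast
  rw [abs_mul_abs_self]
  linear_combination 12 * two_mul_natCast_pentagonal k

theorem coeff_expand_eight_pentagonalSeries_eq_zero {R : Type*} [CommRing R] {n : ℕ}
    (hn : ¬ IsSquare (3 * n + 1)) :
    coeff n (expand 8 (by norm_num) (pentagonalSeries R)) = 0 := by
  rw [coeff_expand]
  split_ifs with h8
  · apply coeff_pentagonalSeries_eq_zero
    rintro ⟨k, hk⟩
    obtain ⟨m, rfl⟩ := h8
    rw [Nat.mul_div_cancel_left _ (by norm_num)] at hk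
    apply hn
    simpa [← hk, ← mul_assoc] using isSquare_twentyFour_mul_pentagonal_add_one k
  · rfl

theorem not_isSquare_of_dvd_of_not_sq_dvd {M : Type*} [CommMonoidWithZero M] {p m : M}
    (hp : Prime p) (hdvd : p ∣ m) (hsq : ¬ p ^ 2 ∣ m) : ¬ IsSquare m := by
  rintro ⟨r, rfl⟩
  have hr : p ∣ r := (hp.dvd_mul.mp hdvd).elim id id
  exact hsq (sq p ▸ mul_dvd_mul hr hr)

theorem not_isSquare_three_mul_add_one {p n j : ℕ} (hp : p.Prime) (hp3 : p % 3 = 2)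
    (hj : ¬ p ∣ j) : ¬ IsSquare (3 * (p ^ 2 * n + (p ^ 2 - 1) / 3 + p * j) + 1) := by
  have hsq_mod : p ^ 2 % 3 = 1 := by rw [Nat.pow_mod, hp3]
  have hsq : 3 * ((p ^ 2 - 1) / 3) + 1 = p ^ 2 := by omega
  have hfactor :
      3 * (p ^ 2 * n + (p ^ 2 - 1) / 3 + p * j) + 1 = p * (p * (3 * n + 1) + 3 * j) := by
    rw [show 3 * (p ^ 2 * n + (p ^ 2 - 1) / 3 + p * j) + 1
        = 3 * (p ^ 2 * n) + (3 * ((p ^ 2 - 1) / 3) + 1) + 3 * (p * j) by ring, hsq]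
    ring
  have hp_not_dvd : ¬ p ∣ 3 * j := by
    rw [hp.prime.dvd_mul]
    rintro (h3 | hpj)
    · have := (Nat.prime_dvd_prime_iff_eq hp Nat.prime_three).mp h3
      omega
    · exact hj hpj
  rw [hfactor]
  refine not_isSquare_of_dvd_of_not_sq_dvd hp.prime (dvd_mul_right _ _) ?_
  rw [sq, Nat.mul_dvd_mul_iff_left hp.pos, Nat.dvd_add_right (dvd_mul_right _ _)]
  exact hp_not_dvd

theorem EObar_cong_family_mod_two_general (EObar : ℕ → ℕ)
    (hEO : PowerSeries.mk (fun n => (EObar n : ℚ)) = qp 4 4 ^ 3 * (qp 2 2 ^ 2)⁻¹)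
    (p : ℕ) (hp : p.Prime) (hp3 : p % 3 = 2)
    (n j : ℕ) (hj : ¬ p ∣ j) :
    2 ∣ EObar (p ^ 2 * n + (p ^ 2 - 1) / 3 + p * j) := by
  have hcoeff := congrArg (coeff (p ^ 2 * n + (p ^ 2 - 1) / 3 + p * j))
    (mk_mod_two_eq_expand_pentagonalSeries EObar hEO)
  rw [coeff_mk, coeff_expand_eight_pentagonalSeries_eq_zero
    (not_isSquare_three_mul_add_one hp hp3 hj)] at hcoeff
  exact (ZMod.natCast_eq_zero_iff _ 2).mp hcoeff

/-- For a prime `p ≥ 5` with `p ≡ 2 (mod 3)` and `p ∤ j`: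
`EObar(p²n + (p²-1)/3 + pj) ≡ 0 (mod 2)`. -/
theorem EObar_cong_family_mod_two (EObar : ℕ → ℕ)
    (hEO : PowerSeries.mk (fun n => (EObar n : ℚ)) = qp 4 4 ^ 3 * (qp 2 2 ^ 2)⁻¹)
    (p : ℕ) (hp : p.Prime) (hp5 : 5 ≤ p) (hp3 : p % 3 = 2)
    (n j : ℕ) (hj : ¬ p ∣ j) :
    2 ∣ EObar (p ^ 2 * n + (p ^ 2 - 1) / 3 + p * j) :=
  EObar_cong_family_mod_two_general EObar hEO p hp hp3 n j hj
end

section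
/- Let k, n be nonnegative integers and let p_1,…,p_{k+1} ≥ 5 be primes with p_i ≡ 2 (mod 3) for all i. Then for any integer j with p_{k+1} ∤ j, EO-bar(p_1^2⋯p_{k+1}^2 n + (p_1^2⋯p_k^2 p_{k+1}(3j + p_{k+1}) - 1)/3) ≡ 0 (mod 2). -/
open PowerSeries

/-!
Modulo 2 the Frobenius gives `(q^2;q^2)_∞^2 ≡ (q^4;q^4)_∞` and `(q^4;q^4)_∞^2 ≡ (q^8;q^8)_∞`, so the
generating function of `EObar` is `(q^8;q^8)_∞` mod 2. By Euler's pentagonal number theorem its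
coefficient at `N` vanishes unless `N = 8 k(3k-1)/2`, i.e. unless `3N + 1 = (6k-1)^2` is a square.
For the `N` of the theorem, `3N + 1 = (p_1⋯p_k)^2 · p_{k+1} · (3j + p_{k+1}(3n+1))` and `p_{k+1}`
does not divide the last factor, so `3N + 1` is not a square.
-/

open Finset

section QPochhammer

variable (R : Type*) [CommRing R]

noncomputable def qpProd (a c m : ℕ) : R⟦X⟧ :=
  ∏ i ∈ range m, (1 - X ^ (a + c * i))

noncomputable def qpSeries (a c : ℕ) : R⟦X⟧ :=
  mk fun n => coeff n (qpProd R a c (n + 1))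

theorem qp_eq_qpSeries (a c : ℕ) : qp a c = qpSeries ℚ a c := rfl

variable {R} {a c : ℕ}

theorem coeff_qpProd_succ {n m : ℕ} (h : n < a + c * m) :
    coeff n (qpProd R a c (m + 1)) = coeff n (qpProd R a c m) := by
  rw [qpProd, prod_range_succ, mul_sub, mul_one, map_sub, coeff_mul_X_pow', if_neg (by omega),
    sub_zero, qpProd]

theorem coeff_qpSeries (hc : 0 < c) {n m : ℕ} (h : n < m) :
    coeff n (qpSeries R a c) = coeff n (qpProd R a c m) := by
  induction m, h using Nat.le_induction with
  | base => rw [qpSeries, coeff_mk]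
  | succ m hm ih => rw [ih, coeff_qpProd_succ (by nlinarith)]

theorem X_pow_dvd_qpSeries_sub_qpProd (hc : 0 < c) (m : ℕ) :
    (X : R⟦X⟧) ^ m ∣ qpSeries R a c - qpProd R a c m :=
  X_pow_dvd_iff.2 fun n hn => by rw [map_sub, coeff_qpSeries hc hn, sub_self]

theorem eq_qpSeries_of_X_pow_dvd (hc : 0 < c) {f : R⟦X⟧}
    (hf : ∀ m, (X : R⟦X⟧) ^ m ∣ f - qpProd R a c m) : f = qpSeries R a c := by
  ext n
  have h := dvd_sub (hf (n + 1)) (X_pow_dvd_qpSeries_sub_qpProd (a := a) hc (n + 1))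
  rw [sub_sub_sub_cancel_right] at h
  rw [← sub_eq_zero, ← map_sub]
  exact X_pow_dvd_iff.1 h n n.lt_succ_self

theorem constantCoeff_qpSeries (ha : 0 < a) : constantCoeff (qpSeries R a c) = 1 := by
  rw [← coeff_zero_eq_constantCoeff_apply, qpSeries, coeff_mk]
  simp [qpProd, ha.ne']

theorem isUnit_qpSeries (ha : 0 < a) : IsUnit (qpSeries R a c) :=
  isUnit_iff_constantCoeff.2 (by simp [constantCoeff_qpSeries ha])

theorem map_qpProd {S : Type*} [CommRing S] (φ : R →+* S) (m : ℕ) :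
    map φ (qpProd R a c m) = qpProd S a c m := by
  simp [qpProd, map_prod]

theorem map_qpSeries {S : Type*} [CommRing S] (φ : R →+* S) :
    map φ (qpSeries R a c) = qpSeries S a c := by
  ext n
  rw [coeff_map, qpSeries, qpSeries, coeff_mk, coeff_mk, ← coeff_map, map_qpProd]

theorem qpProd_pow_char (p : ℕ) [Fact p.Prime] [CharP R p] (m : ℕ) :
    qpProd R a c m ^ p = qpProd R (p * a) (p * c) m := by
  have : CharP R⟦X⟧ p := charP_of_injective_ringHom C_injective p
  rw [qpProd, qpProd, ← prod_pow]
  refine prod_congr rfl fun i _ => ?_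
  rw [sub_pow_char, one_pow, ← pow_mul]
  ring_nf

theorem qpSeries_pow_char (p : ℕ) [hp : Fact p.Prime] [CharP R p] (hc : 0 < c) :
    qpSeries R a c ^ p = qpSeries R (p * a) (p * c) :=
  eq_qpSeries_of_X_pow_dvd (Nat.mul_pos hp.out.pos hc) fun m => by
    rw [← qpProd_pow_char]
    exact (X_pow_dvd_qpSeries_sub_qpProd hc m).trans (sub_dvd_pow_sub_pow _ _ p)

theorem expand_qpProd (d : ℕ) (hd : d ≠ 0) (m : ℕ) :
    expand d hd (qpProd R a c m) = qpProd R (d * a) (d * c) m := by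
  simp only [qpProd, map_prod, map_sub, map_one, map_pow, expand_X, ← pow_mul]
  refine prod_congr rfl fun i _ => ?_
  ring_nf

theorem expand_qpSeries (d : ℕ) (hd : d ≠ 0) (hc : 0 < c) :
    expand d hd (qpSeries R a c) = qpSeries R (d * a) (d * c) :=
  eq_qpSeries_of_X_pow_dvd (Nat.mul_pos (Nat.pos_of_ne_zero hd) hc) fun m => by
    have h := map_dvd (expand d hd) (X_pow_dvd_qpSeries_sub_qpProd (R := R) (a := a) hc m)
    rw [map_sub, expand_qpProd, map_pow, expand_X, ← pow_mul] at h
    exact (pow_dvd_pow X (Nat.le_mul_of_pos_left m (Nat.pos_of_ne_zero hd))).trans h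

open Filter in
theorem qpSeries_one_one : qpSeries R 1 1 = pentagonalSeries R := by
  ext n
  obtain ⟨m, hm, hnm⟩ := ((tendsto_finset_range.eventually
    (coeff_prod_one_sub_X_pow_eventually_eq R n)).and (eventually_gt_atTop n)).exists
  rw [coeff_qpSeries one_pos hnm, ← hm, qpProd]
  simp only [one_mul, add_comm 1]

end QPochhammer

theorem map_mk_natCast {R S : Type*} [CommRing R] [CommRing S] (φ : R →+* S) (f : ℕ → ℕ) :
    map φ (mk fun n => (f n : R)) = mk fun n => (f n : S) := by
  ext
  simp

section EObar

variable {EObar : ℕ → ℕ}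

theorem EObar_genfun_mul
    (hEO : mk (fun n => (EObar n : ℚ)) = qp 4 4 ^ 3 * (qp 2 2 ^ 2)⁻¹) (R : Type*) [CommRing R] :
    mk (fun n => (EObar n : R)) * qpSeries R 2 2 ^ 2 = qpSeries R 4 4 ^ 3 := by
  have hℚ : mk (fun n => (EObar n : ℚ)) * qpSeries ℚ 2 2 ^ 2 = qpSeries ℚ 4 4 ^ 3 := by
    have h2 : constantCoeff (qpSeries ℚ 2 2 ^ 2) ≠ 0 := by
      rw [map_pow, constantCoeff_qpSeries two_pos]
      norm_num
    rw [hEO, qp_eq_qpSeries, qp_eq_qpSeries, mul_assoc, PowerSeries.inv_mul_cancel _ h2, mul_one]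
  have hℤ : mk (fun n => (EObar n : ℤ)) * qpSeries ℤ 2 2 ^ 2 = qpSeries ℤ 4 4 ^ 3 :=
    map_injective (Int.castRingHom ℚ) Int.cast_injective <| by
      simpa [map_qpSeries, map_mk_natCast] using hℚ
  simpa [map_qpSeries, map_mk_natCast] using congrArg (map (Int.castRingHom R)) hℤ

theorem EObar_genfun_charTwo
    (hEO : mk (fun n => (EObar n : ℚ)) = qp 4 4 ^ 3 * (qp 2 2 ^ 2)⁻¹) (R : Type*) [CommRing R]
    [CharP R 2] :
    mk (fun n => (EObar n : R)) = expand 8 (by norm_num) (pentagonalSeries R) := by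
  have : Fact (Nat.Prime 2) := ⟨Nat.prime_two⟩
  have h4 : qpSeries R 2 2 ^ 2 = qpSeries R 4 4 := qpSeries_pow_char 2 two_pos
  have h8 : qpSeries R 4 4 ^ 2 = qpSeries R 8 8 := qpSeries_pow_char 2 (by norm_num)
  have h := EObar_genfun_mul hEO R
  rw [h4, pow_succ, h8] at h
  rw [← qpSeries_one_one, expand_qpSeries 8 _ one_pos]
  exact (isUnit_qpSeries (by norm_num)).mul_right_cancel h

theorem two_dvd_EObar_of_not_isSquare
    (hEO : mk (fun n => (EObar n : ℚ)) = qp 4 4 ^ 3 * (qp 2 2 ^ 2)⁻¹) {N : ℕ}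
    (hN : ¬ IsSquare (3 * N + 1)) : 2 ∣ EObar N := by
  rw [← ZMod.natCast_eq_zero_iff, ← coeff_mk N (fun n => (EObar n : ZMod 2)),
    EObar_genfun_charTwo hEO, coeff_expand]
  split_ifs with h8
  · refine coeff_pentagonalSeries_eq_zero _ fun ⟨k, hk⟩ => hN ?_
    obtain ⟨M, rfl⟩ := h8
    rw [Nat.mul_div_cancel_left M (by norm_num)] at hk
    rw [← hk]
    convert isSquare_twentyFour_mul_pentagonal_add_one k using 1
    ring
  · rfl

end EObar

theorem not_isSquare_sq_mul_prime_mul {r q m : ℕ} (hq : q.Prime) (hr : r ≠ 0) (hm : ¬ q ∣ m) :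
    ¬ IsSquare (r ^ 2 * (q * m)) := by
  rintro ⟨t, ht⟩
  obtain ⟨s, rfl⟩ : r ∣ t := (Nat.pow_dvd_pow_iff two_ne_zero).1 ⟨q * m, by rw [sq t, ← ht]⟩
  have hs : s * s = q * m :=
    Nat.eq_of_mul_eq_mul_left (pow_pos (Nat.pos_of_ne_zero hr) 2) (by rw [ht]; ring)
  obtain ⟨u, rfl⟩ : q ∣ s := (hq.dvd_mul.1 ⟨m, hs⟩).elim id id
  exact hm ⟨u * u, Nat.eq_of_mul_eq_mul_left hq.pos (by rw [← hs]; ring)⟩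

theorem prod_sq_mod_three {ι : Type*} (s : Finset ι) (f : ι → ℕ) (hf : ∀ i ∈ s, ¬ 3 ∣ f i) :
    (∏ i ∈ s, f i ^ 2) % 3 = 1 := by
  have hsq : ∀ i ∈ s, f i ^ 2 % 3 = 1 := fun i hi => by
    have := hf i hi
    rw [Nat.pow_mod]
    rcases (by omega : f i % 3 = 1 ∨ f i % 3 = 2) with h | h <;> rw [h]
  rw [prod_nat_mod, prod_congr rfl hsq, prod_const_one, Nat.one_mod]

theorem three_mul_add_one_eq {Q q : ℕ} (hQ : Q % 3 = 1) (hq : q % 3 = 2) (n j : ℕ) :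
    3 * (Q * q ^ 2 * n + (Q * q * (3 * j + q) - 1) / 3) + 1 =
      Q * (q * (3 * j + q * (3 * n + 1))) := by
  have hA : Q * q * (3 * j + q) % 3 = 1 := by
    rw [Nat.mul_mod, Nat.mul_mod Q, hQ, hq, Nat.add_mod, Nat.mul_mod_right, hq]
  have h3 : 3 * ((Q * q * (3 * j + q) - 1) / 3) = Q * q * (3 * j + q) - 1 := by omega
  have h1 : 1 ≤ Q * q * (3 * j + q) := by omega
  zify [h1] at h3 ⊢
  linear_combination h3

theorem EObar_infinite_family_mod_two_general (EObar : ℕ → ℕ)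
    (hEO : PowerSeries.mk (fun n => (EObar n : ℚ)) = qp 4 4 ^ 3 * (qp 2 2 ^ 2)⁻¹)
    (k n : ℕ) (p : ℕ → ℕ)
    (hp : ∀ i ∈ Finset.range (k + 1), (p i).Prime)
    (hp3 : ∀ i ∈ Finset.range (k + 1), p i % 3 = 2)
    (j : ℕ) (hj : ¬ p k ∣ j) :
    2 ∣ EObar ((∏ i ∈ Finset.range (k + 1), p i ^ 2) * n +
      ((∏ i ∈ Finset.range k, p i ^ 2) * p k * (3 * j + p k) - 1) / 3) := by
  have hk : k ∈ range (k + 1) := self_mem_range_succ k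
  have h3_ndvd : ∀ i ∈ range k, ¬ 3 ∣ p i := fun i hi => by
    have := hp3 i (range_subset_range.2 k.le_succ hi)
    omega
  have hprod : ∏ i ∈ range k, p i ≠ 0 := prod_ne_zero_iff.2 fun i hi => by
    have := h3_ndvd i hi
    omega
  have hm : ¬ p k ∣ 3 * j + p k * (3 * n + 1) := by
    rw [Nat.dvd_add_left (dvd_mul_right (p k) _)]
    intro hd
    rcases (hp k hk).dvd_mul.1 hd with h3 | hpj
    · have := (Nat.prime_dvd_prime_iff_eq (hp k hk) Nat.prime_three).1 h3
      have := hp3 k hk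
      omega
    · exact hj hpj
  apply two_dvd_EObar_of_not_isSquare hEO
  rw [prod_range_succ, three_mul_add_one_eq (prod_sq_mod_three _ _ h3_ndvd) (hp3 k hk), prod_pow]
  exact not_isSquare_sq_mul_prime_mul (hp k hk) hprod hm

/-- Theorem 1.1 of Ray–Barman: if `p 0, …, p k` are primes `≥ 5`, each `≡ 2 (mod 3)`
(playing the roles of `p_1, …, p_{k+1}`), then for any `j` not divisible by `p k`,
`EObar(p_1²⋯p_{k+1}² n + (p_1²⋯p_k² p_{k+1}(3j + p_{k+1}) - 1)/3) ≡ 0 (mod 2)`. -/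
theorem EObar_infinite_family_mod_two (EObar : ℕ → ℕ)
    (hEO : PowerSeries.mk (fun n => (EObar n : ℚ)) = qp 4 4 ^ 3 * (qp 2 2 ^ 2)⁻¹)
    (k n : ℕ) (p : ℕ → ℕ)
    (hp : ∀ i ∈ Finset.range (k + 1), (p i).Prime)
    (hp5 : ∀ i ∈ Finset.range (k + 1), 5 ≤ p i)
    (hp3 : ∀ i ∈ Finset.range (k + 1), p i % 3 = 2)
    (j : ℕ) (hj : ¬ p k ∣ j) :
    2 ∣ EObar ((∏ i ∈ Finset.range (k + 1), p i ^ 2) * n +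
      ((∏ i ∈ Finset.range k, p i ^ 2) * p k * (3 * j + p k) - 1) / 3) :=
  EObar_infinite_family_mod_two_general EObar hEO k n p hp hp3 j hj
end
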